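/- Let ε ∈ {+1,−1} and let z = x + iy : ℝ → ℂ be a C^∞ function with 1 + ε|z(s)|² > 0 for all s. Define T : ℝ → ℝ³ by T := ( 2x/(1 + ε|z|²), 2y/(1 + ε|z|²), (1 − ε|z|²)/(1 + ε|z|²) ). Then for every s ∈ ℝ: (a) T′(s) ∘_ε T′(s) = ( 2|z′(s)| / (1 + ε|z(s)|²) )², i.e. the generalized curvature c := (T′ ∘_ε T′)^{1/2} equals 2|z′|/(1 + ε|z|²); and (b) if moreover z′(s) ≠ 0, then the generalized torsion τ := (1/c²) · T ∘_ε ( T′ ∧_ε T″ ) satisfies τ(s) = 2 Im( z(s) \overline{z′(s)} ) / ( |z(s)|² + ε ) + Im( \overline{z′(s)} z″(s) ) / |z′(s)|². -/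

import Mathlib

open MeasureTheory Set Filter Topology

noncomputable section

/-- Generalized cross product `a ∧_ε b` on ℝ³ (ε = 1: Euclidean, ε = -1: hyperbolic). -/
def wedge (ε : ℝ) (a b : Fin 3 → ℝ) : Fin 3 → ℝ :=
  ![a 1 * b 2 - a 2 * b 1, a 2 * b 0 - a 0 * b 2, ε * (a 0 * b 1 - a 1 * b 0)]

/-- Generalized scalar product `a ∘_ε b` on ℝ³. -/
def circ (ε : ℝ) (a b : Fin 3 → ℝ) : ℝ :=
  a 0 * b 0 + a 1 * b 1 + ε * (a 2 * b 2)

/-- Inverse stereographic projection of `z = x + iy` onto the sphere (ε = 1) or the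
hyperboloid (ε = -1): `T = (2x/(1+ε|z|²), 2y/(1+ε|z|²), (1-ε|z|²)/(1+ε|z|²))`. -/
def invStereo (ε : ℝ) (z : ℝ → ℂ) (s : ℝ) : Fin 3 → ℝ :=
  ![2 * (z s).re / (1 + ε * ‖z s‖ ^ 2),
    2 * (z s).im / (1 + ε * ‖z s‖ ^ 2),
    (1 - ε * ‖z s‖ ^ 2) / (1 + ε * ‖z s‖ ^ 2)]

set_option maxHeartbeats 2000000 in
theorem stmt16 (ε : ℝ) (hε : ε = 1 ∨ ε = -1)
    (z : ℝ → ℂ) (hz : ContDiff ℝ (⊤ : ℕ∞) z)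
    (hden : ∀ s : ℝ, 0 < 1 + ε * ‖z s‖ ^ 2) :
    ∀ s : ℝ,
      circ ε (deriv (invStereo ε z) s) (deriv (invStereo ε z) s)
        = (2 * ‖deriv z s‖ / (1 + ε * ‖z s‖ ^ 2)) ^ 2 ∧
      (deriv z s ≠ 0 →
        (circ ε (deriv (invStereo ε z) s) (deriv (invStereo ε z) s))⁻¹
            * circ ε (invStereo ε z s)
                (wedge ε (deriv (invStereo ε z) s) (deriv (deriv (invStereo ε z)) s))
          = 2 * (z s * (starRingEnd ℂ) (deriv z s)).im / (‖z s‖ ^ 2 + ε)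
            + ((starRingEnd ℂ) (deriv z s) * deriv (deriv z) s).im / ‖deriv z s‖ ^ 2) := by
  have hnormsq : ∀ w : ℂ, ‖w‖ ^ 2 = w.re ^ 2 + w.im ^ 2 := fun w => by
    rw [Complex.sq_norm, Complex.normSq_apply]; ring
  have hz1 := (contDiff_infty_iff_deriv.mp (hz.of_le (by simp))).2
  have hzd : ∀ t, HasDerivAt z (deriv z t) t := fun t => (hz.differentiable (by simp) t).hasDerivAt
  have hzdd : ∀ t, HasDerivAt (deriv z) (deriv (deriv z) t) t :=
    fun t => (hz1.differentiable (by simp) t).hasDerivAt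
  set a : ℝ → ℝ := fun t => (z t).re with hadef
  set b : ℝ → ℝ := fun t => (z t).im with hbdef
  set p : ℝ → ℝ := fun t => (deriv z t).re with hpdef
  set q : ℝ → ℝ := fun t => (deriv z t).im with hqdef
  set p2 : ℝ → ℝ := fun t => (deriv (deriv z) t).re with hp2def
  set q2 : ℝ → ℝ := fun t => (deriv (deriv z) t).im with hq2def
  have hA : ∀ t, HasDerivAt a (p t) t := fun t => by
    simpa [hadef, hpdef, Function.comp_def] using Complex.reCLM.hasFDerivAt.comp_hasDerivAt t (hzd t)
  have hB : ∀ t, HasDerivAt b (q t) t := fun t => by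
    simpa [hbdef, hqdef, Function.comp_def] using Complex.imCLM.hasFDerivAt.comp_hasDerivAt t (hzd t)
  have hP : ∀ t, HasDerivAt p (p2 t) t := fun t => by
    simpa [hpdef, hp2def, Function.comp_def] using Complex.reCLM.hasFDerivAt.comp_hasDerivAt t (hzdd t)
  have hQ : ∀ t, HasDerivAt q (q2 t) t := fun t => by
    simpa [hqdef, hq2def, Function.comp_def] using Complex.imCLM.hasFDerivAt.comp_hasDerivAt t (hzdd t)
  set D : ℝ → ℝ := fun t => 1 + ε * (a t ^ 2 + b t ^ 2) with hDdef
  set Dd : ℝ → ℝ := fun t => ε * (2 * a t * p t + 2 * b t * q t) with hDddef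
  have hD0 : ∀ t, D t ≠ 0 := fun t => by
    have h := hden t
    rw [hnormsq (z t)] at h
    simp only [hDdef, hadef, hbdef]
    exact ne_of_gt h
  have hDder : ∀ t, HasDerivAt D (Dd t) t := fun t => by
    rw [hDdef, hDddef]
    exact (((((hA t).pow 2).add ((hB t).pow 2)).const_mul ε).const_add 1).congr_deriv
      (by push_cast; ring)
  -- first derivative components
  set G0 : ℝ → ℝ := fun t => (2 * p t * D t - 2 * a t * Dd t) / D t ^ 2 with hG0def
  set G1 : ℝ → ℝ := fun t => (2 * q t * D t - 2 * b t * Dd t) / D t ^ 2 with hG1def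
  set G2 : ℝ → ℝ := fun t => -2 * Dd t / D t ^ 2 with hG2def
  have hF0 : ∀ t, HasDerivAt (fun r => 2 * a r / D r) (G0 t) t := fun t => by
    rw [hG0def]
    exact (((hA t).const_mul 2).div (hDder t) (hD0 t)).congr_deriv (by ring)
  have hF1 : ∀ t, HasDerivAt (fun r => 2 * b r / D r) (G1 t) t := fun t => by
    rw [hG1def]
    exact (((hB t).const_mul 2).div (hDder t) (hD0 t)).congr_deriv (by ring)
  have hF2 : ∀ t, HasDerivAt (fun r => (1 - ε * (a r ^ 2 + b r ^ 2)) / D r) (G2 t) t := fun t => by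
    have hnum : HasDerivAt (fun r => 1 - ε * (a r ^ 2 + b r ^ 2)) (-Dd t) t := by
      rw [hDddef]
      exact ((((hA t).pow 2).add ((hB t).pow 2)).const_mul ε).const_sub 1
        |>.congr_deriv (by push_cast; ring)
    rw [hG2def]
    refine (hnum.div (hDder t) (hD0 t)).congr_deriv ?_
    have : (1 - ε * (a t ^ 2 + b t ^ 2)) = 2 - D t := by
      simp only [hDdef]; ring
    rw [this]
    ring
  have hTeq : invStereo ε z = fun t =>
      ![2 * a t / D t, 2 * b t / D t, (1 - ε * (a t ^ 2 + b t ^ 2)) / D t] := by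
    funext t
    simp only [invStereo, hnormsq (z t), hDdef, hadef, hbdef]
  have hTder : ∀ t, HasDerivAt (invStereo ε z) ![G0 t, G1 t, G2 t] t := fun t => by
    rw [hTeq]
    apply hasDerivAt_pi.mpr
    intro i
    fin_cases i
    · simpa using hF0 t
    · simpa using hF1 t
    · simpa using hF2 t
  have hTd : deriv (invStereo ε z) = fun t => ![G0 t, G1 t, G2 t] :=
    funext fun t => (hTder t).deriv
  intro s
  -- second derivative at s
  set Ddd : ℝ := ε * (2 * p s * p s + 2 * a s * p2 s + (2 * q s * q s + 2 * b s * q2 s))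
    with hDdddef
  have hDdder : HasDerivAt Dd Ddd s := by
    rw [hDddef, hDdddef]
    exact ((((hA s).const_mul 2).mul (hP s)).add (((hB s).const_mul 2).mul (hQ s))).const_mul ε
      |>.congr_deriv (by ring)
  have hDsq : HasDerivAt (fun t => D t ^ 2) (2 * D s * Dd s) s :=
    ((hDder s).pow 2).congr_deriv (by push_cast; ring)
  set n0 : ℝ := 2 * p s * D s - 2 * a s * Dd s with hn0def
  set n1 : ℝ := 2 * q s * D s - 2 * b s * Dd s with hn1def
  set n2 : ℝ := -2 * Dd s with hn2def
  have hG0s : G0 s = n0 / D s ^ 2 := by rw [hG0def, hn0def]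
  have hG1s : G1 s = n1 / D s ^ 2 := by rw [hG1def, hn1def]
  have hG2s : G2 s = n2 / D s ^ 2 := by rw [hG2def, hn2def]
  set m0 : ℝ := (2 * p2 s * D s + 2 * p s * Dd s - (2 * p s * Dd s + 2 * a s * Ddd)) * D s ^ 2
      - (2 * p s * D s - 2 * a s * Dd s) * (2 * D s * Dd s) with hm0def
  set m1 : ℝ := (2 * q2 s * D s + 2 * q s * Dd s - (2 * q s * Dd s + 2 * b s * Ddd)) * D s ^ 2
      - (2 * q s * D s - 2 * b s * Dd s) * (2 * D s * Dd s) with hm1def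
  set m2 : ℝ := (-2 * Ddd) * D s ^ 2 - (-2 * Dd s) * (2 * D s * Dd s) with hm2def
  set H0 : ℝ := m0 / (D s ^ 2) ^ 2 with hH0def
  set H1 : ℝ := m1 / (D s ^ 2) ^ 2 with hH1def
  set H2 : ℝ := m2 / (D s ^ 2) ^ 2 with hH2def
  have hG0d : HasDerivAt G0 H0 s := by
    rw [hG0def, hH0def, hm0def]
    have hnum : HasDerivAt (fun t => 2 * p t * D t - 2 * a t * Dd t)
        (2 * p2 s * D s + 2 * p s * Dd s - (2 * p s * Dd s + 2 * a s * Ddd)) s :=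
      ((((hP s).const_mul 2).mul (hDder s)).sub (((hA s).const_mul 2).mul hDdder)).congr_deriv
        (by ring)
    exact (hnum.div hDsq (pow_ne_zero 2 (hD0 s)))
  have hG1d : HasDerivAt G1 H1 s := by
    rw [hG1def, hH1def, hm1def]
    have hnum : HasDerivAt (fun t => 2 * q t * D t - 2 * b t * Dd t)
        (2 * q2 s * D s + 2 * q s * Dd s - (2 * q s * Dd s + 2 * b s * Ddd)) s :=
      ((((hQ s).const_mul 2).mul (hDder s)).sub (((hB s).const_mul 2).mul hDdder)).congr_deriv
        (by ring)
    exact (hnum.div hDsq (pow_ne_zero 2 (hD0 s)))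
  have hG2d : HasDerivAt G2 H2 s := by
    rw [hG2def, hH2def, hm2def]
    have hnum : HasDerivAt (fun t => -2 * Dd t) (-2 * Ddd) s :=
      (hDdder.const_mul (-2)).congr_deriv (by ring)
    exact (hnum.div hDsq (pow_ne_zero 2 (hD0 s)))
  have hTdd : deriv (deriv (invStereo ε z)) s = ![H0, H1, H2] := by
    have : HasDerivAt (deriv (invStereo ε z)) ![H0, H1, H2] s := by
      rw [hTd]
      apply hasDerivAt_pi.mpr
      intro i
      fin_cases i
      · simpa using hG0d
      · simpa using hG1d
      · simpa using hG2d
    exact this.deriv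
  have hTds : deriv (invStereo ε z) s = ![G0 s, G1 s, G2 s] := (hTder s).deriv
  have hTs : invStereo ε z s = ![2 * a s / D s, 2 * b s / D s,
      (1 - ε * (a s ^ 2 + b s ^ 2)) / D s] := by rw [hTeq]
  have hD0' := hD0 s
  -- key curvature formula
  have hkey : circ ε (deriv (invStereo ε z) s) (deriv (invStereo ε z) s)
      = 4 * (p s ^ 2 + q s ^ 2) / D s ^ 2 := by
    rw [hTds]
    simp only [circ, Matrix.cons_val_zero, Matrix.cons_val_one, Matrix.head_cons,
      Matrix.cons_val_two, Matrix.tail_cons]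
    simp only [hG0def, hG1def, hG2def]
    field_simp
    simp only [hDdef, hDddef]
    rcases hε with rfl | rfl <;> ring
  have hzn : ‖z s‖ ^ 2 = a s ^ 2 + b s ^ 2 := by
    simp only [hadef, hbdef]; exact hnormsq (z s)
  have hzn' : ‖deriv z s‖ ^ 2 = p s ^ 2 + q s ^ 2 := by
    simp only [hpdef, hqdef]; exact hnormsq (deriv z s)
  constructor
  · rw [hkey, div_pow, mul_pow, hzn, hzn']
    simp only [hDdef]
    norm_num
  · intro hzs
    have hq0 : p s ^ 2 + q s ^ 2 ≠ 0 := by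
      have : (0:ℝ) < p s ^ 2 + q s ^ 2 := by
        have := Complex.normSq_pos.mpr hzs
        rw [Complex.normSq_apply] at this
        simp only [hpdef, hqdef]
        nlinarith
      exact ne_of_gt this
    have him1 : (z s * (starRingEnd ℂ) (deriv z s)).im = b s * p s - a s * q s := by
      simp only [hadef, hbdef, hpdef, hqdef, Complex.mul_im, Complex.conj_re, Complex.conj_im]
      ring
    have him2 : ((starRingEnd ℂ) (deriv z s) * deriv (deriv z) s).im
        = p s * q2 s - q s * p2 s := by
      simp only [hpdef, hqdef, hp2def, hq2def, Complex.mul_im, Complex.conj_re, Complex.conj_im]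
      ring
    have hW : circ ε (invStereo ε z s)
        (wedge ε (deriv (invStereo ε z) s) (deriv (deriv (invStereo ε z)) s))
        = 8 * ε * (b s * p s - a s * q s) * (p s ^ 2 + q s ^ 2) / D s ^ 3
          + 4 * (p s * q2 s - q s * p2 s) / D s ^ 2 := by
      rw [hTds, hTdd, hTs]
      simp only [wedge, circ, Matrix.cons_val_zero, Matrix.cons_val_one, Matrix.head_cons,
        Matrix.cons_val_two, Matrix.tail_cons]
      rw [hG0s, hG1s, hG2s, hH0def, hH1def, hH2def]
      set R : ℝ := 1 - ε * (a s ^ 2 + b s ^ 2) with hRdef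
      field_simp
      simp only [hm0def, hm1def, hm2def, hn0def, hn1def, hn2def, hRdef, hDdddef, hDddef, hDdef]
      rcases hε with rfl | rfl <;> ring
    rw [hkey, hW, him1, him2, hzn, hzn']
    have hr : ‖z s‖ ^ 2 = a s ^ 2 + b s ^ 2 := hzn
    rcases hε with rfl | rfl
    · have h2 : a s ^ 2 + b s ^ 2 + (1:ℝ) = D s := by simp only [hDdef]; ring
      rw [h2]
      field_simp
      ring
    · have h2 : a s ^ 2 + b s ^ 2 + (-1:ℝ) = -D s := by simp only [hDdef]; ring
      rw [h2]
      have hD0n : -D s ≠ 0 := neg_ne_zero.mpr hD0'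
      field_simp
      ring
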